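/- Let n ≥ 2 be an integer, δ > 0, let k ≥ 1 and q ≥ 0 be integers, β ≥ 1, α ∈ (0,1), and assume n^δ/ln(n) ≥ 3(k+1)(q+1)β/α³. Let y ∈ [0,1]^n and let z_1,…,z_n be independent random variables with z_j = 1 with probability y_j and z_j = 0 otherwise. Let ρ_1,…,ρ_n be reals with |ρ_j| ≤ (q+1)·β·n^q for every j, and set ρ = Σ_{j=1}^n ρ_j·z_j, ρ̂ = Σ_{j=1}^n ρ_j·y_j, and ρ̄ = Σ_{j=1}^n |ρ_j|. Then with probability at least 1 − 4/n^{k+1}: ρ̂ − α·ρ̄ − 2·α·n^{q+δ} ≤ ρ ≤ ρ̂ + α·ρ̄ + 2·α·n^{q+δ}. -/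

import Mathlib

/-!
Under randomized rounding, `ρ - ρ̂ = ∑ j, ρ_j (z_j - y_j)` is a sum of independent centred
variables, the `j`-th ranging over an interval of length `|ρ_j|`. By Hoeffding's lemma it is
sub-Gaussian with variance proxy `∑ ρ_j² / 4 ≤ ρ̄ M / 4`, where `M = (q+1) β n^q` bounds every
`|ρ_j|`. The Chernoff bound at `t = α / M` then bounds each tail beyond `α ρ̄ + 2 α n^(q+δ)` by
`exp (-2 α² n^δ / ((q+1) β)) ≤ n^(-(k+1))`, so both tails together have probability at most
`2 / n^(k+1)`.
-/

open MeasureTheory ProbabilityTheory Real Finset unitInterval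
open scoped NNReal

lemma ProbabilityTheory.HasSubgaussianMGF.measureReal_ge_le_exp_add {Ω : Type*}
    [MeasurableSpace Ω] {μ : Measure Ω} [IsFiniteMeasure μ] {X : Ω → ℝ} {c : ℝ≥0}
    (h : HasSubgaussianMGF X c μ) (ε : ℝ) {t : ℝ} (ht : 0 ≤ t) :
    μ.real {ω | ε ≤ X ω} ≤ exp (-t * ε + c * t ^ 2 / 2) :=
  calc μ.real {ω | ε ≤ X ω} ≤ exp (-t * ε) * mgf X μ t :=
        measure_ge_le_exp_mul_mgf ε ht (h.integrable_exp_mul t)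
    _ ≤ exp (-t * ε + c * t ^ 2 / 2) := by
        rw [exp_add]
        gcongr
        exact h.mgf_le t

lemma hasSubgaussianMGF_bernoulliMeasure_centered (p : I) :
    HasSubgaussianMGF (fun b : Bool ↦ (if b then (1 : ℝ) else 0) - p) (1 / 4)
      Ber(true, false, p) := by
  have hoeffding := hasSubgaussianMGF_of_mem_Icc_of_integral_eq_zero
    (X := fun b : Bool ↦ (if b then (1 : ℝ) else 0) - p) (μ := Ber(true, false, p))
    (a := -(p : ℝ)) (b := 1 - p) (by fun_prop) (ae_of_all _ fun b ↦ by cases b <;> simp)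
    (by simp [integral_bernoulliMeasure]; ring)
  convert hoeffding using 1
  ext
  norm_num

section RandomizedRounding

variable {ι : Type*} [Fintype ι]

noncomputable def roundingMeasure (p : ι → I) : Measure (ι → Bool) :=
  Measure.pi fun i ↦ Ber(true, false, p i)

instance (p : ι → I) : IsProbabilityMeasure (roundingMeasure p) := by
  unfold roundingMeasure
  infer_instance

lemma roundingMeasure_real_singleton (p : ι → I) (z : ι → Bool) :
    (roundingMeasure p).real {z} = ∏ i, if z i then (p i : ℝ) else 1 - p i := by
  rw [roundingMeasure, measureReal_def, Measure.pi_singleton, ENNReal.toReal_prod]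
  refine prod_congr rfl fun i _ ↦ ?_
  cases z i <;> simp

lemma roundingMeasure_real_setOf [DecidableEq ι] (p : ι → I) (P : (ι → Bool) → Prop)
    [DecidablePred P] :
    (roundingMeasure p).real {z | P z} =
      ∑ z, if P z then ∏ i, (if z i then (p i : ℝ) else 1 - p i) else 0 := by
  rw [← sum_filter, ← coe_filter_univ, ← sum_measureReal_singleton]
  exact sum_congr rfl fun z _ ↦ roundingMeasure_real_singleton p z

lemma hasSubgaussianMGF_roundingMeasure_coord (p : ι → I) (i : ι) :
    HasSubgaussianMGF (fun z ↦ (if z i then (1 : ℝ) else 0) - p i) (1 / 4)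
      (roundingMeasure p) := by
  refine HasSubgaussianMGF.of_map (Y := fun z : ι → Bool ↦ z i)
    (X := fun b : Bool ↦ (if b then (1 : ℝ) else 0) - p i)
    (measurable_pi_apply i).aemeasurable ?_
  rw [roundingMeasure, (measurePreserving_eval _ i).map_eq]
  exact hasSubgaussianMGF_bernoulliMeasure_centered (p i)

lemma hasSubgaussianMGF_roundingMeasure_sum (p : ι → I) (c : ι → ℝ) :
    HasSubgaussianMGF (fun z ↦ ∑ i, c i * ((if z i then (1 : ℝ) else 0) - p i))
      ((∑ i, ‖c i‖₊ ^ 2) / 4) (roundingMeasure p) := by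
  rw [sum_div]
  refine HasSubgaussianMGF.sum_of_iIndepFun
    (X := fun i (z : ι → Bool) ↦ c i * ((if z i then (1 : ℝ) else 0) - p i)) ?_ fun i _ ↦ ?_
  · exact iIndepFun_pi (X := fun i (b : Bool) ↦ c i * ((if b then (1 : ℝ) else 0) - p i))
      fun i ↦ by fun_prop
  · convert (hasSubgaussianMGF_roundingMeasure_coord p i).const_mul (c i) using 1
    ext
    change _ = ((⟨c i ^ 2, sq_nonneg _⟩ : ℝ≥0) : ℝ) * ((1 / 4 : ℝ≥0) : ℝ)
    simp [div_eq_mul_inv]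

lemma roundingMeasure_real_lt_abs_sum_le (p : ι → I) (c : ι → ℝ) (a : ℝ) {t : ℝ}
    (ht : 0 ≤ t) :
    (roundingMeasure p).real {z | a < |∑ i, c i * ((if z i then (1 : ℝ) else 0) - p i)|} ≤
      2 * exp (-t * a + (∑ i, c i ^ 2) / 4 * t ^ 2 / 2) := by
  set μ := roundingMeasure p
  set S := fun z : ι → Bool ↦ ∑ i, c i * ((if z i then (1 : ℝ) else 0) - p i)
  have hS := hasSubgaussianMGF_roundingMeasure_sum p c
  have hproxy : (((∑ i, ‖c i‖₊ ^ 2) / 4 : ℝ≥0) : ℝ) = (∑ i, c i ^ 2) / 4 := by simp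
  have hupper := hS.measureReal_ge_le_exp_add a ht
  have hlower := hS.neg.measureReal_ge_le_exp_add a ht
  rw [hproxy] at hupper hlower
  calc μ.real {z | a < |S z|} ≤ μ.real ({z | a ≤ S z} ∪ {z | a ≤ (-S) z}) := by
        refine measureReal_mono fun z hz ↦ ?_
        rcases lt_abs.mp (Set.mem_ofPred.mp hz) with h | h
        · exact Or.inl h.le
        · exact Or.inr h.le
    _ ≤ μ.real {z | a ≤ S z} + μ.real {z | a ≤ (-S) z} := measureReal_union_le _ _
    _ ≤ 2 * exp (-t * a + (∑ i, c i ^ 2) / 4 * t ^ 2 / 2) := by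
        rw [two_mul]
        exact add_le_add hupper hlower

lemma sum_sq_le_sum_abs_mul {c : ι → ℝ} {M : ℝ} (hc : ∀ i, |c i| ≤ M) :
    ∑ i, c i ^ 2 ≤ (∑ i, |c i|) * M := by
  rw [sum_mul]
  refine sum_le_sum fun i _ ↦ ?_
  rw [← sq_abs, sq]
  exact mul_le_mul_of_nonneg_left (hc i) (abs_nonneg _)

end RandomizedRounding

lemma chernoff_exponent_le {s A M α b : ℝ} (hs : s ≤ A * M) (hA : 0 ≤ A) (hM : 0 < M) :
    -(α / M) * (α * A + b) + s / 4 * (α / M) ^ 2 / 2 ≤ -(α / M * b) := by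
  have hvar : s / 4 * (α / M) ^ 2 / 2 ≤ α ^ 2 * A / (8 * M) :=
    calc s / 4 * (α / M) ^ 2 / 2 ≤ A * M / 4 * (α / M) ^ 2 / 2 := by gcongr
      _ = α ^ 2 * A / (8 * M) := by field_simp; ring
  have hmean : α ^ 2 * A / (8 * M) ≤ α ^ 2 * A / M := by gcongr; linarith
  have hexpand : -(α / M) * (α * A + b) = -(α ^ 2 * A / M) - α / M * b := by ring
  linarith

lemma log_le_of_rounding_condition {n k q : ℕ} {δ β α : ℝ} (hn : 2 ≤ n) (hβ : 1 ≤ β)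
    (hα : 0 < α) (hα' : α < 1)
    (hcond : 3 * ((k : ℝ) + 1) * ((q : ℝ) + 1) * β / α ^ 3 ≤ (n : ℝ) ^ δ / Real.log n) :
    ((k : ℝ) + 1) * Real.log n ≤
      α / (((q : ℝ) + 1) * β * (n : ℝ) ^ q) * (2 * α * (n : ℝ) ^ ((q : ℝ) + δ)) := by
  have hlog : 0 < Real.log n := Real.log_pos (by exact_mod_cast hn)
  have hcond' : 3 * ((k : ℝ) + 1) * ((q : ℝ) + 1) * β * Real.log n ≤ α ^ 3 * (n : ℝ) ^ δ := by
    rwa [div_le_div_iff₀ (by positivity) hlog, mul_comm _ (α ^ 3)] at hcond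
  have hα3 : α ^ 3 * (n : ℝ) ^ δ ≤ α ^ 2 * (n : ℝ) ^ δ :=
    mul_le_mul_of_nonneg_right (pow_le_pow_of_le_one hα.le hα'.le (by norm_num)) (by positivity)
  have hnonneg : 0 ≤ ((k : ℝ) + 1) * Real.log n * (((q : ℝ) + 1) * β) := by positivity
  rw [Real.rpow_add (by positivity), Real.rpow_natCast,
    show α / (((q : ℝ) + 1) * β * (n : ℝ) ^ q) * (2 * α * ((n : ℝ) ^ q * (n : ℝ) ^ δ)) =
      2 * α ^ 2 * (n : ℝ) ^ δ / (((q : ℝ) + 1) * β) by field_simp,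
    le_div_iff₀ (by positivity)]
  linarith

open Classical in
theorem rounding_lemma_general_general (n k q : ℕ) (δ β α : ℝ)
    (hn : 2 ≤ n) (hβ : 1 ≤ β) (hα : 0 < α) (hα' : α < 1)
    (hcond : 3 * ((k : ℝ) + 1) * ((q : ℝ) + 1) * β / α ^ 3 ≤ (n : ℝ) ^ δ / Real.log n)
    (y : Fin n → ℝ) (hy : ∀ j, 0 ≤ y j ∧ y j ≤ 1)
    (ρc : Fin n → ℝ) (hρc : ∀ j, |ρc j| ≤ ((q : ℝ) + 1) * β * (n : ℝ) ^ q) :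
    (1 : ℝ) - 4 / (n : ℝ) ^ (k + 1) ≤
      ∑ z : Fin n → Bool,
        (if (∑ j, ρc j * y j) - α * (∑ j, |ρc j|) - 2 * α * (n : ℝ) ^ ((q : ℝ) + δ) ≤
              (∑ j, ρc j * (if z j then (1 : ℝ) else 0)) ∧
            (∑ j, ρc j * (if z j then (1 : ℝ) else 0)) ≤
              (∑ j, ρc j * y j) + α * (∑ j, |ρc j|) + 2 * α * (n : ℝ) ^ ((q : ℝ) + δ)
          then ∏ j, (if z j then y j else 1 - y j) else 0) := by
  let p : Fin n → I := fun j ↦ ⟨y j, hy j⟩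
  let M := ((q : ℝ) + 1) * β * (n : ℝ) ^ q
  let a := α * ∑ j, |ρc j| + 2 * α * (n : ℝ) ^ ((q : ℝ) + δ)
  let S := fun z : Fin n → Bool ↦ ∑ j, ρc j * ((if z j then (1 : ℝ) else 0) - p j)
  have hM : 0 < M := by positivity
  have hexp : -(α / M) * a + (∑ j, ρc j ^ 2) / 4 * (α / M) ^ 2 / 2 ≤
      -(((k : ℝ) + 1) * Real.log n) :=
    (chernoff_exponent_le (sum_sq_le_sum_abs_mul hρc) (by positivity) hM).trans
      (neg_le_neg (log_le_of_rounding_condition hn hβ hα hα' hcond))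
  have hbad : (roundingMeasure p).real {z | a < |S z|} ≤ 2 / (n : ℝ) ^ (k + 1) :=
    calc _ ≤ 2 * exp (-(α / M) * a + (∑ j, ρc j ^ 2) / 4 * (α / M) ^ 2 / 2) :=
          roundingMeasure_real_lt_abs_sum_le p ρc a (by positivity)
      _ ≤ 2 * exp (-(((k : ℝ) + 1) * Real.log n)) := by gcongr
      _ = 2 / (n : ℝ) ^ (k + 1) := by
          rw [← Real.rpow_natCast, Real.rpow_def_of_pos (by positivity), exp_neg]
          push_cast
          ring_nf
  refine le_of_le_of_eq ?_ (roundingMeasure_real_setOf p _)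
  refine le_trans ?_ (measureReal_mono (s₁ := {z | a < |S z|}ᶜ) fun z hz ↦ ?_)
  · have : 2 / (n : ℝ) ^ (k + 1) ≤ 4 / (n : ℝ) ^ (k + 1) := by gcongr; norm_num
    rw [probReal_compl_eq_one_sub .of_discrete]
    linarith
  · have hdev : |(∑ j, ρc j * (if z j then (1 : ℝ) else 0)) - ∑ j, ρc j * y j| ≤ a := by
      simpa [S, mul_sub, sum_sub_distrib] using hz
    rw [abs_le] at hdev
    constructor <;> linarith

open Classical in
/-- Rounding lemma (general, signed coefficients): if z is obtained from
    y ∈ [0,1]^n by independent randomized rounding, then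
    ρ̂ − α·ρ̄ − 2α n^{q+δ} ≤ ρ ≤ ρ̂ + α·ρ̄ + 2α n^{q+δ}
    holds with probability at least 1 − 4/n^{k+1}, where ρ = Σ_j ρ_j z_j,
    ρ̂ = Σ_j ρ_j y_j and ρ̄ = Σ_j |ρ_j|. -/
theorem rounding_lemma_general (n k q : ℕ) (δ β α : ℝ)
    (hn : 2 ≤ n) (hδ : 0 < δ) (hk : 1 ≤ k) (hβ : 1 ≤ β) (hα : 0 < α) (hα' : α < 1)
    (hcond : 3 * ((k : ℝ) + 1) * ((q : ℝ) + 1) * β / α ^ 3 ≤ (n : ℝ) ^ δ / Real.log n)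
    (y : Fin n → ℝ) (hy : ∀ j, 0 ≤ y j ∧ y j ≤ 1)
    (ρc : Fin n → ℝ) (hρc : ∀ j, |ρc j| ≤ ((q : ℝ) + 1) * β * (n : ℝ) ^ q) :
    (1 : ℝ) - 4 / (n : ℝ) ^ (k + 1) ≤
      ∑ z : Fin n → Bool,
        (if (∑ j, ρc j * y j) - α * (∑ j, |ρc j|) - 2 * α * (n : ℝ) ^ ((q : ℝ) + δ) ≤
              (∑ j, ρc j * (if z j then (1 : ℝ) else 0)) ∧
            (∑ j, ρc j * (if z j then (1 : ℝ) else 0)) ≤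
              (∑ j, ρc j * y j) + α * (∑ j, |ρc j|) + 2 * α * (n : ℝ) ^ ((q : ℝ) + δ)
          then ∏ j, (if z j then y j else 1 - y j) else 0) :=
  rounding_lemma_general_general n k q δ β α hn hβ hα hα' hcond y hy ρc hρc
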